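/- arXiv:1205.2876 — 3 statements merged into one kernel-verified Lean document; each statement's English description precedes it below -/
import Mathlib

section
/- Fix m ∈ ℕ and let a_m := inf_{h∈(0,1)} f_{m+1}(h)/f_m(h). Then for all n ≥ m and all h ∈ [0,1], a_m^{n−m} · f_m(h) ≤ f_n(h). -/
/-!
`f (n + 1) = (f n ∘ T₀ + f n ∘ T₁) / 2`, where `T₀ h = h ^ 2` and `T₁ h = 1 - (1 - h) ^ 2` map
`[0, 1]` into itself, and `g ↦ (g ∘ T₀ + g ∘ T₁) / 2` is a positive linear operator on functions
on `[0, 1]`. Hence the one-step inequality `a m * f m ≤ f (m + 1)` on `[0, 1]` (on `(0, 1)` by the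
definition of `a m`, at the endpoints because every `f n` vanishes there) propagates to
`a m * f n ≤ f (n + 1)` for all `n ≥ m`, and chaining these gives the geometric lower bound.
-/

/-- The polynomials `f_n : [0,1] → ℝ` defined by `f_0(h) = h(1-h)` and
`f_n(h) = (f_{n-1}(h^2) + f_{n-1}(1-(1-h)^2))/2`. -/
noncomputable def f : ℕ → ℝ → ℝ
  | 0, h => h * (1 - h)
  | n + 1, h => (f n (h ^ 2) + f n (1 - (1 - h) ^ 2)) / 2

/-- `a_m := inf_{h ∈ (0,1)} f_{m+1}(h) / f_m(h)`. -/
noncomputable def a (m : ℕ) : ℝ :=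
  sInf ((fun h => f (m + 1) h / f m h) '' Set.Ioo (0 : ℝ) 1)

section UnitInterval

variable {h : ℝ}

lemma sq_mem_Icc_zero_one (hh : h ∈ Set.Icc (0 : ℝ) 1) : h ^ 2 ∈ Set.Icc (0 : ℝ) 1 := by
  obtain ⟨h0, h1⟩ := hh
  constructor <;> nlinarith

lemma one_sub_one_sub_sq_mem_Icc_zero_one (hh : h ∈ Set.Icc (0 : ℝ) 1) :
    1 - (1 - h) ^ 2 ∈ Set.Icc (0 : ℝ) 1 := by
  obtain ⟨h0, h1⟩ := hh
  constructor <;> nlinarith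

lemma sq_mem_Ioo_zero_one (hh : h ∈ Set.Ioo (0 : ℝ) 1) : h ^ 2 ∈ Set.Ioo (0 : ℝ) 1 := by
  obtain ⟨h0, h1⟩ := hh
  constructor <;> nlinarith

lemma one_sub_one_sub_sq_mem_Ioo_zero_one (hh : h ∈ Set.Ioo (0 : ℝ) 1) :
    1 - (1 - h) ^ 2 ∈ Set.Ioo (0 : ℝ) 1 := by
  obtain ⟨h0, h1⟩ := hh
  constructor <;> nlinarith

end UnitInterval

lemma f_pos (n : ℕ) {h : ℝ} (hh : h ∈ Set.Ioo (0 : ℝ) 1) : 0 < f n h := by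
  induction n generalizing h with
  | zero =>
    obtain ⟨h0, h1⟩ := hh
    simp only [f]
    nlinarith
  | succ n ih =>
    simp only [f]
    have := ih (sq_mem_Ioo_zero_one hh)
    have := ih (one_sub_one_sub_sq_mem_Ioo_zero_one hh)
    positivity

lemma f_apply_zero (n : ℕ) : f n 0 = 0 := by
  induction n with
  | zero => simp [f]
  | succ n ih => norm_num [f, ih]

lemma f_apply_one (n : ℕ) : f n 1 = 0 := by
  induction n with
  | zero => simp [f]
  | succ n ih => norm_num [f, ih]

lemma f_succ_div_f_nonneg (m : ℕ) :
    ∀ x ∈ (fun h => f (m + 1) h / f m h) '' Set.Ioo (0 : ℝ) 1, 0 ≤ x := by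
  rintro _ ⟨h, hh, rfl⟩
  exact (div_pos (f_pos _ hh) (f_pos _ hh)).le

lemma a_nonneg (m : ℕ) : 0 ≤ a m :=
  Real.sInf_nonneg (f_succ_div_f_nonneg m)

lemma a_mul_f_le_f_succ_self (m : ℕ) {h : ℝ} (hh : h ∈ Set.Icc (0 : ℝ) 1) :
    a m * f m h ≤ f (m + 1) h := by
  rcases hh.1.eq_or_lt with rfl | h0
  · simp [f_apply_zero]
  rcases hh.2.eq_or_lt with rfl | h1
  · simp [f_apply_one]
  have hio : h ∈ Set.Ioo (0 : ℝ) 1 := ⟨h0, h1⟩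
  rw [← le_div_iff₀ (f_pos m hio)]
  exact csInf_le ⟨0, f_succ_div_f_nonneg m⟩ ⟨h, hio, rfl⟩

lemma mul_f_le_f_succ_succ {c : ℝ} {n : ℕ}
    (hc : ∀ h ∈ Set.Icc (0 : ℝ) 1, c * f n h ≤ f (n + 1) h) :
    ∀ h ∈ Set.Icc (0 : ℝ) 1, c * f (n + 1) h ≤ f (n + 2) h := by
  intro h hh
  have h₀ := hc _ (sq_mem_Icc_zero_one hh)
  have h₁ := hc _ (one_sub_one_sub_sq_mem_Icc_zero_one hh)
  simp only [f] at h₀ h₁ ⊢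
  linarith

lemma a_mul_f_le_f_succ {m n : ℕ} (hmn : m ≤ n) :
    ∀ h ∈ Set.Icc (0 : ℝ) 1, a m * f n h ≤ f (n + 1) h := by
  induction n, hmn using Nat.le_induction with
  | base => exact fun h hh => a_mul_f_le_f_succ_self m hh
  | succ n _ ih => exact mul_f_le_f_succ_succ ih

/-- For all `n ≥ m` and `h ∈ [0,1]`, `a_m^(n-m) · f_m(h) ≤ f_n(h)`. -/
theorem f_lower_bound (m : ℕ) :
    ∀ n ≥ m, ∀ h ∈ Set.Icc (0 : ℝ) 1, a m ^ (n - m) * f m h ≤ f n h := by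
  intro n hn h hh
  obtain ⟨k, rfl⟩ := Nat.exists_eq_add_of_le hn
  rw [Nat.add_sub_cancel_left]
  exact geom_le (u := fun j => f (m + j) h) (a_nonneg m) k
    fun j _ => a_mul_f_le_f_succ (Nat.le_add_right m j) h hh
end

section
/- Let X be a random variable on a probability space taking values in [0,1], let I := E[1−X], and suppose E[X(1−X)] ≥ γ·t for some γ > 0 and t ∈ (0,1]. Then for any α, β ≥ 0 with 2α + β = γ one has P(X ≤ α·t) ≤ I − β·t. -/
/-!
Let `p = P(X ≤ c)` with `c = α t`. Pointwise, `x (1 - x) + 1_{x ≤ c} ≤ (1 - x) + 2c` on `[0, 1]`: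
below `c` this is `x (2 - x) ≤ 2x ≤ 2c`, above `c` it is `x (1 - x) ≤ 1 - x`. Integrating gives
`γ t ≤ E[X (1 - X)] ≤ I - p + 2 α t`, that is `p ≤ I - (γ - 2α) t = I - β t`.
-/

open MeasureTheory Set

lemma mul_one_sub_add_indicator_le {x c : ℝ} (hx : x ∈ Icc (0 : ℝ) 1) (hc : 0 ≤ c) :
    x * (1 - x) + (Iic c).indicator 1 x ≤ 1 - x + 2 * c := by
  obtain ⟨hx0, hx1⟩ := hx
  by_cases hxc : x ≤ c
  · rw [indicator_of_mem (mem_Iic.mpr hxc), Pi.one_apply]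
    nlinarith
  · rw [indicator_of_notMem (by simpa using hxc)]
    nlinarith

lemma integrable_of_ae_mem_Icc {Ω : Type*} [MeasurableSpace Ω] {μ : Measure Ω}
    [IsFiniteMeasure μ] {f : Ω → ℝ} (hf : AEStronglyMeasurable f μ) {a b : ℝ}
    (hab : ∀ᵐ ω ∂μ, f ω ∈ Icc a b) : Integrable f μ :=
  .of_bound hf (max |a| |b|) <| hab.mono fun _ h ↦ abs_le_max_abs_abs h.1 h.2

lemma integral_mul_one_sub_add_measureReal_le {Ω : Type*} [MeasurableSpace Ω] {μ : Measure Ω}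
    [IsProbabilityMeasure μ] {X : Ω → ℝ} (hX : Measurable X)
    (hX01 : ∀ᵐ ω ∂μ, X ω ∈ Icc (0 : ℝ) 1) {c : ℝ} (hc : 0 ≤ c) :
    ∫ ω, X ω * (1 - X ω) ∂μ + μ.real {ω | X ω ≤ c} ≤ ∫ ω, (1 - X ω) ∂μ + 2 * c := by
  have hXint : Integrable X μ := integrable_of_ae_mem_Icc hX.aestronglyMeasurable hX01
  have hvar : Integrable (fun ω ↦ X ω * (1 - X ω)) μ :=
    integrable_of_ae_mem_Icc (a := 0) (b := 1)
      (hX.mul (measurable_const.sub hX)).aestronglyMeasurable <|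
      hX01.mono fun _ h ↦ ⟨by nlinarith [h.1, h.2], by nlinarith [h.1, h.2]⟩
  have hind : Integrable (fun ω ↦ (Iic c).indicator (1 : ℝ → ℝ) (X ω)) μ :=
    integrable_of_ae_mem_Icc (a := 0) (b := 1)
      ((measurable_one.indicator measurableSet_Iic).comp hX).aestronglyMeasurable <|
      .of_forall fun _ ↦ ⟨indicator_nonneg (fun _ _ ↦ zero_le_one) _,
        indicator_le_self' (fun _ _ ↦ zero_le_one) _⟩
  have hind_eq : ∫ ω, (Iic c).indicator 1 (X ω) ∂μ = μ.real {ω | X ω ≤ c} := by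
    rw [← integral_indicator_one (measurableSet_le hX measurable_const)]
    rfl
  have hone_sub : Integrable (fun ω ↦ 1 - X ω) μ := (integrable_const 1).sub hXint
  calc ∫ ω, X ω * (1 - X ω) ∂μ + μ.real {ω | X ω ≤ c}
      = ∫ ω, (X ω * (1 - X ω) + (Iic c).indicator 1 (X ω)) ∂μ := by
        rw [integral_add hvar hind, hind_eq]
    _ ≤ ∫ ω, (1 - X ω + 2 * c) ∂μ :=
        integral_mono_ae (hvar.add hind) (hone_sub.add (integrable_const _))
          (hX01.mono fun _ h ↦ mul_one_sub_add_indicator_le h hc)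
    _ = ∫ ω, (1 - X ω) ∂μ + 2 * c := by
        rw [integral_add hone_sub (integrable_const _), integral_const, probReal_univ, one_smul]

theorem prob_small_entropy_bound_general {Ω : Type*} [MeasurableSpace Ω] (μ : Measure Ω)
    [IsProbabilityMeasure μ] (X : Ω → ℝ) (hXmeas : Measurable X)
    (hX01 : ∀ᵐ ω ∂μ, X ω ∈ Set.Icc (0 : ℝ) 1)
    (γ t : ℝ) (ht : t ∈ Set.Ioc (0 : ℝ) 1)
    (hE : γ * t ≤ ∫ ω, X ω * (1 - X ω) ∂μ)
    (α β : ℝ) (hα : 0 ≤ α) (hsum : 2 * α + β = γ) :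
    (μ {ω | X ω ≤ α * t}).toReal ≤ (∫ ω, (1 - X ω) ∂μ) - β * t := by
  have key := integral_mul_one_sub_add_measureReal_le hXmeas hX01 (mul_nonneg hα ht.1.le)
  rw [measureReal_def] at key
  subst hsum
  linarith

/-- Let `X` take values in `[0,1]` on a probability space, let `I := E[1-X]`, and suppose
`E[X(1-X)] ≥ γ·t` with `γ > 0` and `t ∈ (0,1]`. Then for `α, β ≥ 0` with `2α + β = γ`,
`P(X ≤ α·t) ≤ I - β·t`. -/
theorem prob_small_entropy_bound {Ω : Type*} [MeasurableSpace Ω] (μ : Measure Ω)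
    [IsProbabilityMeasure μ] (X : Ω → ℝ) (hXmeas : Measurable X)
    (hX01 : ∀ᵐ ω ∂μ, X ω ∈ Set.Icc (0 : ℝ) 1)
    (γ t : ℝ) (hγ : 0 < γ) (ht : t ∈ Set.Ioc (0 : ℝ) 1)
    (hE : γ * t ≤ ∫ ω, X ω * (1 - X ω) ∂μ)
    (α β : ℝ) (hα : 0 ≤ α) (hβ : 0 ≤ β) (hsum : 2 * α + β = γ) :
    (μ {ω | X ω ≤ α * t}).toReal ≤ (∫ ω, (1 - X ω) ∂μ) - β * t :=
  prob_small_entropy_bound_general μ X hXmeas hX01 γ t ht hE α β hα hsum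
end

section
/- Fix m ∈ ℕ and h ∈ (0,1), and set μ_m := −1/log₂(a_m) and γ := 2^{m/μ_m}·f_m(h). Then for every n ≥ m, the number of binary strings b ∈ {0,1}^n with H_b(h) ≤ (γ/4)·2^{−n/μ_m} is at most 2^n·((1−h) − (γ/2)·2^{−n/μ_m}). -/
/-- `H_b(h)`: starting from `h_0 = h`, apply `x ↦ x²` when the bit is `1` (true) and
`x ↦ 1 - (1-x)²` when the bit is `0` (false), following the bits `b 0, b 1, …` in order.
This is the erasure probability of the polar sub-channel of `BEC(h)` indexed by `b`. -/
noncomputable def Hb {n : ℕ} (b : Fin n → Bool) (h : ℝ) : ℝ :=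
  (List.ofFn b).foldl (fun x bi => if bi then x ^ 2 else 1 - (1 - x) ^ 2) h

/-- `μ_m := -1 / log₂ a_m`. -/
noncomputable def mu (m : ℕ) : ℝ := -1 / Real.logb 2 (a m)

/-- `γ := 2^(m/μ_m) · f_m(h)`. -/
noncomputable def gam (m : ℕ) (h : ℝ) : ℝ := (2 : ℝ) ^ ((m : ℝ) / mu m) * f m h

/-!
Each polarization step `x ↦ (x², 1 - (1 - x)²)` preserves the mean, and the recursion of `f_n`
is exactly the average of `x (1 - x)` over one step. Summing over all `2^n` strings therefore
gives `∑ H_b = 2^n h` and `∑ H_b (1 - H_b) = 2^n f_n(h)`, i.e.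
`∑ (1 - H_b)² = 2^n ((1 - h) - f_n(h))`.
Since the recursion is monotone, `f_{m+1} ≥ a_m f_m` propagates to `f_n ≥ a_m^{n-m} f_m`, and
`a_m^{n-m} f_m(h)` is exactly `D := γ 2^{-n/μ_m}`. Every string with `H_b ≤ D/4` contributes at
least `(1 - D/4)²` to the second moment, and an elementary inequality (using `D ≤ f_n ≤ 1/4`)
turns this into the bound.
-/

open Finset Set

lemma sq_mem_Ioo {x : ℝ} (hx : x ∈ Ioo (0 : ℝ) 1) : x ^ 2 ∈ Ioo (0 : ℝ) 1 := by
  obtain ⟨h0, h1⟩ := hx; constructor <;> nlinarith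

lemma one_sub_one_sub_sq_mem_Ioo {x : ℝ} (hx : x ∈ Ioo (0 : ℝ) 1) :
    1 - (1 - x) ^ 2 ∈ Ioo (0 : ℝ) 1 := by
  obtain ⟨h0, h1⟩ := hx; constructor <;> nlinarith

lemma f_succ (n : ℕ) (x : ℝ) : f (n + 1) x = (f n (x ^ 2) + f n (1 - (1 - x) ^ 2)) / 2 := rfl

lemma f_pos_s13 (n : ℕ) {x : ℝ} (hx : x ∈ Ioo (0 : ℝ) 1) : 0 < f n x := by
  induction n generalizing x with
  | zero => obtain ⟨h0, h1⟩ := hx; exact mul_pos h0 (by linarith)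
  | succ n ih =>
    rw [f_succ]
    linarith [ih (sq_mem_Ioo hx), ih (one_sub_one_sub_sq_mem_Ioo hx)]

lemma f_le_quarter (n : ℕ) (x : ℝ) : f n x ≤ 1 / 4 := by
  induction n generalizing x with
  | zero => show x * (1 - x) ≤ 1 / 4; nlinarith [sq_nonneg (x - 1 / 2)]
  | succ n ih => rw [f_succ]; linarith [ih (x ^ 2), ih (1 - (1 - x) ^ 2)]

lemma mul_f_succ_le_f_succ {c : ℝ} {k l : ℕ}
    (hkl : ∀ x ∈ Ioo (0 : ℝ) 1, c * f k x ≤ f l x) {x : ℝ} (hx : x ∈ Ioo (0 : ℝ) 1) :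
    c * f (k + 1) x ≤ f (l + 1) x := by
  rw [f_succ, f_succ]
  linarith [hkl _ (sq_mem_Ioo hx), hkl _ (one_sub_one_sub_sq_mem_Ioo hx)]

lemma three_quarters_mul_f_le_f_succ (n : ℕ) {x : ℝ} (hx : x ∈ Ioo (0 : ℝ) 1) :
    3 / 4 * f n x ≤ f (n + 1) x := by
  induction n generalizing x with
  | zero =>
    obtain ⟨h0, h1⟩ := hx
    simp only [f]
    nlinarith [mul_nonneg (mul_nonneg h0.le (sub_nonneg.2 h1.le)) (sq_nonneg (x - 1 / 2))]
  | succ n ih => exact mul_f_succ_le_f_succ (fun y hy => ih hy) hx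

lemma bddBelow_f_succ_div_f (m : ℕ) :
    BddBelow ((fun x => f (m + 1) x / f m x) '' Ioo (0 : ℝ) 1) := by
  refine ⟨0, ?_⟩
  rintro _ ⟨x, hx, rfl⟩
  exact div_nonneg (f_pos_s13 (m + 1) hx).le (f_pos_s13 m hx).le

lemma a_mul_f_le_f_succ_s13 (m : ℕ) {x : ℝ} (hx : x ∈ Ioo (0 : ℝ) 1) :
    a m * f m x ≤ f (m + 1) x :=
  (le_div_iff₀ (f_pos_s13 m hx)).1 (csInf_le (bddBelow_f_succ_div_f m) ⟨x, hx, rfl⟩)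

lemma three_quarters_le_a (m : ℕ) : 3 / 4 ≤ a m := by
  refine le_csInf ⟨_, 1 / 2, by norm_num, rfl⟩ ?_
  rintro _ ⟨x, hx, rfl⟩
  exact (le_div_iff₀ (f_pos_s13 m hx)).2 (three_quarters_mul_f_le_f_succ m hx)

lemma a_pos (m : ℕ) : 0 < a m := by linarith [three_quarters_le_a m]

lemma a_pow_mul_f_le_f_add (m k : ℕ) {x : ℝ} (hx : x ∈ Ioo (0 : ℝ) 1) :
    a m ^ k * f m x ≤ f (m + k) x := by
  induction k generalizing x with
  | zero => simp
  | succ k ih =>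
    calc a m ^ (k + 1) * f m x = a m ^ k * (a m * f m x) := by ring
      _ ≤ a m ^ k * f (m + 1) x :=
        mul_le_mul_of_nonneg_left (a_mul_f_le_f_succ_s13 m hx) (pow_nonneg (a_pos m).le k)
      _ ≤ f (m + k + 1) x := mul_f_succ_le_f_succ (fun y hy => ih hy) hx

lemma gam_mul_rpow_eq {m n : ℕ} (hmn : m ≤ n) (h : ℝ) :
    gam m h * (2 : ℝ) ^ (-(n : ℝ) / mu m) = f m h * a m ^ (n - m) := by
  set c := Real.logb 2 (a m)
  -- `-1 / c` is inverted by `-c` even when `c = 0`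
  have hdiv : ∀ y : ℝ, y / mu m = -(y * c) := fun y => by simp [mu, c, div_eq_mul_inv]
  have hexp : (m : ℝ) / mu m + -(n : ℝ) / mu m = ((n - m : ℕ) : ℝ) * c := by
    rw [hdiv, hdiv, Nat.cast_sub hmn]; ring
  rw [gam, mul_comm _ (f m h), mul_assoc, ← Real.rpow_add two_pos, hexp, mul_comm _ c,
    Real.rpow_mul_natCast zero_le_two, Real.rpow_logb two_pos (by norm_num) (a_pos m), mul_comm]

lemma Hb_cons {n : ℕ} (x : Bool) (b : Fin n → Bool) (h : ℝ) :
    Hb (Fin.cons x b) h = Hb b (if x then h ^ 2 else 1 - (1 - h) ^ 2) := by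
  simp [Hb, List.ofFn_succ]

lemma sum_Hb_succ (F : ℝ → ℝ) (n : ℕ) (h : ℝ) :
    ∑ b : Fin (n + 1) → Bool, F (Hb b h) =
      ∑ b : Fin n → Bool, F (Hb b (h ^ 2)) +
        ∑ b : Fin n → Bool, F (Hb b (1 - (1 - h) ^ 2)) := by
  rw [← (Fin.consEquiv fun _ => Bool).sum_comp, Fintype.sum_prod_type, Fintype.sum_bool]
  simp [Fin.consEquiv, Hb_cons]

lemma sum_Hb (n : ℕ) (h : ℝ) : ∑ b : Fin n → Bool, Hb b h = 2 ^ n * h := by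
  induction n generalizing h with
  | zero => simp [Hb]
  | succ n ih => exact (sum_Hb_succ id n h).trans (by simp only [id, ih]; ring)

lemma sum_Hb_mul_one_sub_Hb (n : ℕ) (h : ℝ) :
    ∑ b : Fin n → Bool, Hb b h * (1 - Hb b h) = 2 ^ n * f n h := by
  induction n generalizing h with
  | zero => simp [Hb, f]
  | succ n ih => rw [sum_Hb_succ (fun x => x * (1 - x)), ih, ih, f_succ]; ring

lemma sum_one_sub_Hb_sq (n : ℕ) (h : ℝ) :
    ∑ b : Fin n → Bool, (1 - Hb b h) ^ 2 = 2 ^ n * ((1 - h) - f n h) := by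
  have hsq : ∀ b : Fin n → Bool, (1 - Hb b h) ^ 2 = 1 - Hb b h - Hb b h * (1 - Hb b h) :=
    fun b => by ring
  simp only [hsq, sum_sub_distrib, sum_Hb, sum_Hb_mul_one_sub_Hb, sum_const, card_univ,
    Fintype.card_fun, Fintype.card_bool, Fintype.card_fin, nsmul_eq_mul]
  push_cast; ring

lemma card_filter_mul_sq_le_sum {ι : Type*} [Fintype ι] (x : ι → ℝ) {t : ℝ} (ht : t ≤ 1)
    [DecidablePred fun i => x i ≤ t] :
    (#{i | x i ≤ t} : ℝ) * (1 - t) ^ 2 ≤ ∑ i, (1 - x i) ^ 2 := by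
  rw [← nsmul_eq_mul]
  refine (card_nsmul_le_sum _ _ _ fun i hi => ?_).trans
    (sum_le_sum_of_subset_of_nonneg (subset_univ _) fun i _ _ => sq_nonneg _)
  have hi : x i ≤ t := (mem_filter.1 hi).2
  exact pow_le_pow_left₀ (by linarith) (by linarith) 2

lemma le_mul_sub_half_of_mul_sq_le {c N u D : ℝ} (hN : 0 ≤ N) (hu : u ∈ Icc (0 : ℝ) 1)
    (hD : D ∈ Icc (0 : ℝ) 1) (hc : c * (1 - D / 4) ^ 2 ≤ N * (u - D)) :
    c ≤ N * (u - D / 2) := by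
  obtain ⟨hu0, hu1⟩ := hu
  obtain ⟨hD0, hD1⟩ := hD
  -- the difference of the two sides is `(D/2)(1 - u) + D² (u/16 + 1/4 - D/32)`
  have hpoly : u - D ≤ (u - D / 2) * (1 - D / 4) ^ 2 := by
    nlinarith [mul_nonneg hD0 (sub_nonneg.2 hu1), mul_nonneg (mul_nonneg hD0 hD0) hu0,
      mul_nonneg (mul_nonneg hD0 hD0) (sub_nonneg.2 hD1)]
  refine le_of_mul_le_mul_right ?_ (by nlinarith : (0 : ℝ) < (1 - D / 4) ^ 2)
  calc c * (1 - D / 4) ^ 2 ≤ N * (u - D) := hc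
    _ ≤ N * ((u - D / 2) * (1 - D / 4) ^ 2) := mul_le_mul_of_nonneg_left hpoly hN
    _ = N * (u - D / 2) * (1 - D / 4) ^ 2 := by ring

open scoped Classical in
/-- For `n ≥ m`, the number of `b ∈ {0,1}^n` with `H_b(h) ≤ (γ/4)·2^(-n/μ_m)` is at most
`2^n·((1-h) - (γ/2)·2^(-n/μ_m))`, where `γ := 2^(m/μ_m)·f_m(h)`. -/
theorem count_good_indices_bound (m : ℕ) (h : ℝ) (hh : h ∈ Set.Ioo (0 : ℝ) 1)
    (n : ℕ) (hn : m ≤ n) :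
    ((Finset.univ.filter fun b : Fin n → Bool =>
        Hb b h ≤ gam m h / 4 * (2 : ℝ) ^ (-(n : ℝ) / mu m)).card : ℝ) ≤
      2 ^ n * ((1 - h) - gam m h / 2 * (2 : ℝ) ^ (-(n : ℝ) / mu m)) := by
  set D := f m h * a m ^ (n - m)
  rw [div_mul_eq_mul_div, div_mul_eq_mul_div, gam_mul_rpow_eq hn]
  have hD_pos : 0 < D := mul_pos (f_pos_s13 m hh) (pow_pos (a_pos m) _)
  have hD_le : D ≤ f n h := by
    simpa [D, mul_comm, Nat.add_sub_cancel' hn] using a_pow_mul_f_le_f_add m (n - m) hh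
  have hfn := f_le_quarter n h
  refine le_mul_sub_half_of_mul_sq_le (by positivity) ⟨by linarith [hh.2], by linarith [hh.1]⟩
    ⟨hD_pos.le, by linarith⟩ ?_
  calc _ ≤ ∑ b : Fin n → Bool, (1 - Hb b h) ^ 2 :=
        card_filter_mul_sq_le_sum (Hb · h) (by linarith)
    _ = 2 ^ n * ((1 - h) - f n h) := sum_one_sub_Hb_sq n h
    _ ≤ 2 ^ n * ((1 - h) - D) := by gcongr
end
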